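/- Let n ≥ 2 and let V : ℂⁿ → ℂⁿ be a polynomial map (a polynomial vector field on ℂⁿ) with identically vanishing divergence, i.e., Σ_{i=1}^{n} ∂V_i/∂z_i ≡ 0. Then there exist finitely many vectors v₁,…,v_N ∈ ℂⁿ and polynomials f₁,…,f_N : ℂⁿ → ℂ such that each f_j is constant in the direction v_j (the directional derivative of f_j along v_j vanishes identically) and V(z) = Σ_{j=1}^{N} f_j(z)·v_j for all z ∈ ℂⁿ. (Each summand f_j(z)v_j is a complete divergence-free polynomial vector field whose flow z ↦ z + t f_j(z) v_j consists of additive shears.) -/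

import Mathlib

noncomputable section


open Finset

private lemma rootSum {d : ℕ} (hd : d ≠ 0) {ζ : ℂ} (hζ : IsPrimitiveRoot ζ d) (s : ℕ) :
    ∑ j ∈ Finset.range d, ζ ^ (j * s) = if d ∣ s then (d : ℂ) else 0 := by
  have hrw : ∀ j, ζ ^ (j * s) = (ζ ^ s) ^ j := fun j => by rw [← pow_mul, mul_comm]
  simp only [hrw]
  split_ifs with h
  · have h1 : ζ ^ s = 1 := (hζ.pow_eq_one_iff_dvd s).mpr h
    simp [h1]
  · have hne : ζ ^ s ≠ 1 := fun c => h ((hζ.pow_eq_one_iff_dvd s).mp c)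
    rw [geom_sum_eq hne]
    have h1 : (ζ ^ s) ^ d = 1 := by
      rw [← pow_mul, mul_comm, pow_mul, hζ.pow_eq_one, one_pow]
    simp [h1]

private lemma keySum {d : ℕ} {ζ : ℂ} (hζ : IsPrimitiveRoot ζ d) {k₀ : ℕ} (hk : k₀ < d)
    (x y : ℂ) :
    ∑ j ∈ Finset.range d, ζ ^ (j * (d - k₀)) * (x + ζ ^ j * y) ^ (d - 1)
      = (d : ℂ) * (Nat.choose (d-1) k₀ : ℂ) * x ^ (d - 1 - k₀) * y ^ k₀ := by
  have hd : d ≠ 0 := by omega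
  have step1 : ∀ j, ζ ^ (j * (d - k₀)) * (x + ζ ^ j * y) ^ (d - 1)
      = ∑ k ∈ Finset.range d, x ^ k * y ^ (d - 1 - k) * (Nat.choose (d-1) k : ℂ)
          * ζ ^ (j * ((d - k₀) + (d - 1 - k))) := by
    intro j
    rw [add_pow]
    have h1 : d - 1 + 1 = d := by omega
    rw [h1, Finset.mul_sum]
    refine Finset.sum_congr rfl fun k _ => ?_
    rw [mul_pow, ← pow_mul, Nat.mul_add j, pow_add]
    ring
  simp only [step1]
  rw [Finset.sum_comm]
  have step2 : ∀ k ∈ Finset.range d,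
      ∑ j ∈ Finset.range d, x ^ k * y ^ (d - 1 - k) * (Nat.choose (d-1) k : ℂ)
          * ζ ^ (j * ((d - k₀) + (d - 1 - k)))
      = if k = d - 1 - k₀ then (d:ℂ) * (Nat.choose (d-1) k₀ : ℂ) * x ^ (d-1-k₀) * y ^ k₀ else 0 := by
    intro k hk'
    rw [Finset.mem_range] at hk'
    rw [← Finset.mul_sum, rootSum hd hζ]
    have hdvd : d ∣ (d - k₀) + (d - 1 - k) ↔ k = d - 1 - k₀ := by
      constructor
      · intro hdv
        have h1 : (d - k₀) + (d - 1 - k) ≠ 0 := by omega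
        have h2 : (d - k₀) + (d - 1 - k) < 2 * d := by omega
        have h3 := Nat.eq_of_dvd_of_lt_two_mul h1 hdv h2
        omega
      · intro h; subst h
        have h1 : (d - k₀) + (d - 1 - (d - 1 - k₀)) = d := by omega
        rw [h1]
    split_ifs with h1 h2 h2
    · subst h2
      have e1 : d - 1 - (d - 1 - k₀) = k₀ := by omega
      have e2 : Nat.choose (d-1) (d - 1 - k₀) = Nat.choose (d-1) k₀ :=
        Nat.choose_symm (by omega)
      rw [e1, e2]
      ring
    · exact absurd (hdvd.mp h1) h2
    · exact absurd (hdvd.mpr h2) h1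
    · ring
  rw [Finset.sum_congr rfl step2, Finset.sum_ite_eq' (Finset.range d) (d - 1 - k₀)]
  simp only [Finset.mem_range, if_pos (by omega : d - 1 - k₀ < d)]

open MvPolynomial Finset



private def IsSS (n : ℕ) (W : (Fin n → ℂ) → Fin n → ℂ) : Prop :=
  ∃ (N : ℕ) (v : Fin N → (Fin n → ℂ)) (f : Fin N → MvPolynomial (Fin n) ℂ),
    (∀ (j : Fin N) (z : Fin n → ℂ),
      ∑ i : Fin n, eval z (pderiv i (f j)) * v j i = 0) ∧
    (∀ (z : Fin n → ℂ) (i : Fin n), W z i = ∑ j : Fin N, eval z (f j) * v j i)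

private lemma IsSS_zero (n : ℕ) : IsSS n (fun _ _ => 0) :=
  ⟨0, fun j => j.elim0, fun j => j.elim0, fun j => j.elim0, by simp⟩

private lemma IsSS_congr {n : ℕ} {W W' : (Fin n → ℂ) → Fin n → ℂ}
    (h : ∀ z i, W z i = W' z i) (hW : IsSS n W) : IsSS n W' := by
  obtain ⟨N, v, f, h1, h2⟩ := hW
  exact ⟨N, v, f, h1, fun z i => (h z i) ▸ h2 z i⟩

private lemma IsSS_add {n : ℕ} {W W' : (Fin n → ℂ) → Fin n → ℂ}
    (hW : IsSS n W) (hW' : IsSS n W') : IsSS n (fun z i => W z i + W' z i) := by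
  obtain ⟨N, v, f, h1, h2⟩ := hW
  obtain ⟨N', v', f', h1', h2'⟩ := hW'
  refine ⟨N + N', Fin.append v v', Fin.append f f', fun j z => ?_, fun z i => ?_⟩
  · refine Fin.addCases (fun j' => ?_) (fun j' => ?_) j
    · simpa [Fin.append_left] using h1 j' z
    · simpa [Fin.append_right] using h1' j' z
  · rw [Fin.sum_univ_add]
    simp only [Fin.append_left, Fin.append_right]
    rw [h2 z i, h2' z i]

private lemma IsSS_smul {n : ℕ} (c : ℂ) {W : (Fin n → ℂ) → Fin n → ℂ}
    (hW : IsSS n W) : IsSS n (fun z i => c * W z i) := by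
  obtain ⟨N, v, f, h1, h2⟩ := hW
  refine ⟨N, v, fun j => C c * f j, fun j z => ?_, fun z i => ?_⟩
  · simp only [pderiv_C_mul, eval_mul, eval_C, mul_assoc, ← Finset.mul_sum]
    rw [h1 j z, mul_zero]
  · simp only [eval_mul, eval_C, mul_assoc, ← Finset.mul_sum]
    rw [h2 z i]

private lemma IsSS_sum {n : ℕ} {ι : Type*} (s : Finset ι)
    (W : ι → (Fin n → ℂ) → Fin n → ℂ) (h : ∀ a ∈ s, IsSS n (W a)) :
    IsSS n (fun z i => ∑ a ∈ s, W a z i) := by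
  classical
  induction s using Finset.induction_on with
  | empty => exact IsSS_congr (by simp) (IsSS_zero n)
  | insert a s hx ih =>
    rw [show (fun z i => ∑ b ∈ insert a s, W b z i)
        = fun z i => W a z i + ∑ b ∈ s, W b z i from by
      funext z i; rw [Finset.sum_insert hx]]
    exact IsSS_add (h a (Finset.mem_insert_self a s))
      (ih fun b hb => h b (Finset.mem_insert_of_mem hb))

private lemma IsSS_shear {n : ℕ} (g : MvPolynomial (Fin n) ℂ) (w : Fin n → ℂ)
    (hg : ∀ z, ∑ i : Fin n, eval z (pderiv i g) * w i = 0) :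
    IsSS n (fun z i => eval z g * w i) :=
  ⟨1, fun _ => w, fun _ => g, fun _ z => hg z, fun z i => by simp⟩

private lemma monomial_factor {n : ℕ} {a b : Fin n} (hab : a ≠ b) (δ : Fin n →₀ ℕ) :
    monomial δ (1:ℂ) = X a ^ (δ a) * X b ^ (δ b) * monomial ((δ.erase a).erase b) 1 := by
  rw [X_pow_eq_monomial, X_pow_eq_monomial, monomial_mul, monomial_mul, one_mul, one_mul]
  congr 1
  have h1 : Finsupp.single a (δ a) + δ.erase a = δ := Finsupp.single_add_erase a δ
  have h2 : Finsupp.single b ((δ.erase a) b) + (δ.erase a).erase b = δ.erase a :=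
    Finsupp.single_add_erase b _
  rw [show (δ.erase a) b = δ b from Finsupp.erase_ne (Ne.symm hab)] at h2
  rw [add_assoc, h2, h1]

private lemma IsSS_pair {n : ℕ} {a b : Fin n} (hab : a ≠ b) (γ : Fin n →₀ ℕ) :
    IsSS n (fun z i =>
      (if i = a then ((γ a : ℂ) + 1)⁻¹ * eval z (monomial (γ + Finsupp.single a 1) (1:ℂ)) else 0)
      - (if i = b then ((γ b : ℂ) + 1)⁻¹ * eval z (monomial (γ + Finsupp.single b 1) (1:ℂ)) else 0)) := by
  obtain ⟨d, hd⟩ : ∃ d, d = γ a + γ b + 2 := ⟨_, rfl⟩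
  have hd0 : d ≠ 0 := by omega
  obtain ⟨ζ, hζ⟩ : ∃ ζ : ℂ, IsPrimitiveRoot ζ d :=
    ⟨_, Complex.isPrimitiveRoot_exp d hd0⟩
  obtain ⟨R, hRa, hRb, hmulA, hmulB⟩ :
      ∃ R : MvPolynomial (Fin n) ℂ, pderiv a R = 0 ∧ pderiv b R = 0 ∧
        monomial (γ + Finsupp.single a 1) (1:ℂ) = X a ^ (γ a + 1) * X b ^ (γ b) * R ∧
        monomial (γ + Finsupp.single b 1) (1:ℂ) = X a ^ (γ a) * X b ^ (γ b + 1) * R := by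
    refine ⟨monomial ((γ.erase a).erase b) 1, ?_, ?_, ?_, ?_⟩
    · rw [pderiv_monomial]
      rw [show ((γ.erase a).erase b) a = 0 from by
        rw [Finsupp.erase_ne hab, Finsupp.erase_same]]
      simp
    · rw [pderiv_monomial, Finsupp.erase_same]
      simp
    · rw [monomial_factor hab]
      have e1 : (γ + Finsupp.single a 1 : Fin n →₀ ℕ) a = γ a + 1 := by
        rw [Finsupp.add_apply, Finsupp.single_eq_same]
      have e2 : (γ + Finsupp.single a 1 : Fin n →₀ ℕ) b = γ b := by
        rw [Finsupp.add_apply, Finsupp.single_eq_of_ne' hab, add_zero]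
      have e3 : ((γ + Finsupp.single a 1 : Fin n →₀ ℕ).erase a).erase b
          = (γ.erase a).erase b := by
        rw [Finsupp.erase_add, Finsupp.erase_single, add_zero]
      rw [e1, e2, e3]
    · rw [monomial_factor hab]
      have e1 : (γ + Finsupp.single b 1 : Fin n →₀ ℕ) a = γ a := by
        rw [Finsupp.add_apply, Finsupp.single_eq_of_ne' (Ne.symm hab), add_zero]
      have e2 : (γ + Finsupp.single b 1 : Fin n →₀ ℕ) b = γ b + 1 := by
        rw [Finsupp.add_apply, Finsupp.single_eq_same]
      have e3 : ((γ + Finsupp.single b 1 : Fin n →₀ ℕ).erase a).erase b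
          = (γ.erase a).erase b := by
        rw [Finsupp.erase_add, Finsupp.erase_single_ne hab, Finsupp.erase_add,
          Finsupp.erase_single, add_zero]
      rw [e1, e2, e3]
  obtain ⟨lam, hlam⟩ : ∃ lam : ℂ,
      lam = (((γ a : ℂ)+1) * ((d:ℂ) * (Nat.choose (d-1) (γ b) : ℂ)))⁻¹ := ⟨_, rfl⟩
  have hA1 : ((γ a : ℂ)+1) ≠ 0 := Nat.cast_add_one_ne_zero _
  have hB1 : ((γ b : ℂ)+1) ≠ 0 := Nat.cast_add_one_ne_zero _
  have hdC : ((d:ℂ)) ≠ 0 := Nat.cast_ne_zero.mpr hd0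
  have hch : ((Nat.choose (d-1) (γ b) : ℂ)) ≠ 0 :=
    Nat.cast_ne_zero.mpr (Nat.choose_pos (by omega)).ne'
  refine ⟨d,
    (fun j i => if i = a then ζ^(j:ℕ) else if i = b then -1 else 0),
    (fun j => C (lam * ζ^((j:ℕ)*(γ a+1))) * ((X a + C (ζ^(j:ℕ)) * X b)^(d-1) * R)),
    ?_, ?_⟩
  · -- shear condition
    intro j z
    have hsum : ∀ (F : Fin n → ℂ),
        (∑ i : Fin n, F i * (if i = a then ζ^(j:ℕ) else if i = b then -1 else 0))
          = F a * ζ^(j:ℕ) - F b := by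
      intro F
      rw [← Finset.sum_subset (Finset.subset_univ {a, b})
        (fun i _ hi => by
          simp only [Finset.mem_insert, Finset.mem_singleton, not_or] at hi
          simp [hi.1, hi.2])]
      rw [Finset.sum_pair hab]
      simp [hab, Ne.symm hab]
      ring
    rw [hsum]
    have hpa : pderiv a ((X a + C (ζ^(j:ℕ)) * X b : MvPolynomial (Fin n) ℂ)) = 1 := by
      simp [pderiv_C_mul, pderiv_X_of_ne (Ne.symm hab)]
    have hpb : pderiv b ((X a + C (ζ^(j:ℕ)) * X b : MvPolynomial (Fin n) ℂ)) = C (ζ^(j:ℕ)) := by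
      simp [pderiv_C_mul, pderiv_X_of_ne hab]
    simp only [pderiv_C_mul, pderiv_mul, pderiv_pow, hpa, hpb, hRa, hRb, pderiv_C,
      mul_zero, add_zero, mul_one, zero_mul, zero_add]
    simp only [eval_mul, eval_add, eval_C, eval_pow, eval_X, map_natCast]
    ring
  · -- the sum identity
    intro z i
    dsimp only
    have hterm : ∀ j : ℕ, eval z (C (lam * ζ^(j*(γ a+1))) *
        ((X a + C (ζ^j) * X b)^(d-1) * R))
        = lam * ζ^(j*(γ a+1)) * ((z a + ζ^j * z b)^(d-1) * eval z R) := by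
      intro j
      simp only [eval_mul, eval_add, eval_C, eval_pow, eval_X]
    by_cases hia : i = a
    · rw [hia]
      simp only [eq_self_iff_true, if_true, hab, if_false, sub_zero]
      rw [hmulA]
      rw [Fin.sum_univ_eq_sum_range (fun j => eval z (C (lam * ζ^(j*(γ a+1))) *
        ((X a + C (ζ^j) * X b)^(d-1) * R)) * ζ^j) d]
      simp only [hterm]
      rw [show ∑ j ∈ Finset.range d,
            lam * ζ^(j*(γ a+1)) * ((z a + ζ^j * z b)^(d-1) * eval z R) * ζ^j
          = lam * eval z R * ∑ j ∈ Finset.range d,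
              ζ^(j*(d - γ b)) * (z a + ζ^j * z b)^(d-1) from by
        rw [Finset.mul_sum]
        refine Finset.sum_congr rfl fun j _ => ?_
        rw [show j * (d - γ b) = j*(γ a+1) + j from by rw [show d - γ b = γ a + 2 from by omega]; ring, pow_add]
        ring]
      rw [keySum hζ (show γ b < d from by omega)]
      rw [show d - 1 - γ b = γ a + 1 from by omega]
      simp only [eval_mul, eval_pow, eval_X]
      rw [hlam]
      field_simp
    · by_cases hib : i = b
      · rw [hib]
        simp only [eq_self_iff_true, if_true, Ne.symm hab, if_false, zero_sub]
        rw [hmulB]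
        rw [Fin.sum_univ_eq_sum_range (fun j => eval z (C (lam * ζ^(j*(γ a+1))) *
          ((X a + C (ζ^j) * X b)^(d-1) * R)) * (-1)) d]
        simp only [hterm]
        rw [show ∑ j ∈ Finset.range d,
              lam * ζ^(j*(γ a+1)) * ((z a + ζ^j * z b)^(d-1) * eval z R) * (-1)
            = -(lam * eval z R * ∑ j ∈ Finset.range d,
                ζ^(j*(d - (γ b + 1))) * (z a + ζ^j * z b)^(d-1)) from by
          rw [Finset.mul_sum, ← Finset.sum_neg_distrib]
          refine Finset.sum_congr rfl fun j _ => ?_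
          rw [show j * (d - (γ b + 1)) = j*(γ a+1) from by rw [show d - (γ b + 1) = γ a + 1 from by omega]]
          ring]
        rw [keySum hζ (show γ b + 1 < d from by omega)]
        rw [show d - 1 - (γ b + 1) = γ a from by omega]
        have hccN : (d-1).choose (γ b + 1) * (γ b + 1) = (d-1).choose (γ b) * (γ a + 1) := by
          have h := Nat.choose_succ_right_eq (d-1) (γ b)
          rw [show d - 1 - γ b = γ a + 1 from by omega] at h
          exact h
        have hcc : ((d-1).choose (γ b + 1) : ℂ) * ((γ b : ℂ)+1)
            = ((d-1).choose (γ b) : ℂ) * ((γ a : ℂ)+1) := by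
          exact_mod_cast congrArg (Nat.cast : ℕ → ℂ) hccN
        simp only [eval_mul, eval_pow, eval_X]
        rw [hlam]
        field_simp
        linear_combination (z a ^ (γ a) * z b * z b ^ (γ b) * eval z R) * hcc
      · rw [if_neg hia, if_neg hib, sub_zero]
        symm
        refine Finset.sum_eq_zero fun j _ => ?_
        rw [if_neg hia, if_neg hib, mul_zero]

private lemma coeff_pderiv' {n : ℕ} (Q : MvPolynomial (Fin n) ℂ) (i : Fin n) (γ : Fin n →₀ ℕ) :
    coeff γ (pderiv i Q) = ((γ i : ℂ) + 1) * coeff (γ + Finsupp.single i 1) Q := by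
  induction Q using MvPolynomial.induction_on' with
  | monomial δ c =>
    rw [pderiv_monomial, coeff_monomial, coeff_monomial]
    by_cases h : δ = γ + Finsupp.single i 1
    · subst h
      rw [if_pos (add_tsub_cancel_right (α := Fin n →₀ ℕ) γ (Finsupp.single i 1) : γ + Finsupp.single i 1 - Finsupp.single i 1 = γ), if_pos rfl]
      have e1 : (γ + Finsupp.single i 1 : Fin n →₀ ℕ) i = γ i + 1 := by
        rw [Finsupp.add_apply, Finsupp.single_eq_same]
      rw [e1]
      push_cast
      ring
    · rw [if_neg h, mul_zero]
      by_cases h2 : δ - Finsupp.single i 1 = γ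
      · rw [if_pos h2]
        have hz : δ i = 0 := by
          by_contra hz
          exact h (by
            rw [← h2, tsub_add_cancel_of_le (Finsupp.single_le_iff.mpr (by omega))])
        rw [hz]
        simp
      · rw [if_neg h2]
  | add p q hp hq =>
    rw [map_add, coeff_add, coeff_add, hp, hq]
    ring

private lemma div_coeff {n : ℕ} (P : Fin n → MvPolynomial (Fin n) ℂ)
    (hdiv : ∀ z : Fin n → ℂ, ∑ i : Fin n, eval z (pderiv i (P i)) = 0) (γ : Fin n →₀ ℕ) :
    ∑ i : Fin n, ((γ i : ℂ) + 1) * coeff (γ + Finsupp.single i 1) (P i) = 0 := by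
  have hD : (∑ i : Fin n, pderiv i (P i)) = 0 := by
    apply MvPolynomial.funext
    intro z
    rw [map_sum]
    simpa using hdiv z
  have h := congrArg (coeff γ) hD
  rw [MvPolynomial.coeff_sum] at h
  simp only [coeff_pderiv'] at h
  simpa using h

private lemma IsSS_G {n : ℕ} (hn : 2 ≤ n) (γ : Fin n →₀ ℕ)
    (c : Fin n → ℂ) (hC : ∑ i : Fin n, ((γ i : ℂ) + 1) * c i = 0) :
    IsSS n (fun z i => eval z (monomial (γ + Finsupp.single i 1) (c i))) := by
  have hb0 : 0 < n := by omega
  set b0 : Fin n := ⟨0, hb0⟩ with hb0def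
  have hpair : ∀ i₀ : Fin n, IsSS n (fun z i =>
      (if i = i₀ then ((γ i₀ : ℂ)+1)⁻¹ * eval z (monomial (γ + Finsupp.single i₀ 1) (1:ℂ)) else 0)
      - (if i = b0 then ((γ b0 : ℂ)+1)⁻¹ * eval z (monomial (γ + Finsupp.single b0 1) (1:ℂ)) else 0)) := by
    intro i₀
    by_cases h : i₀ = b0
    · subst h
      exact IsSS_congr (fun z i => (sub_self _).symm) (IsSS_zero n)
    · exact IsSS_pair h γ
  have hsum := IsSS_sum (n := n) Finset.univ
    (fun i₀ z i => (((γ i₀ : ℂ)+1) * c i₀) *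
      ((if i = i₀ then ((γ i₀ : ℂ)+1)⁻¹ * eval z (monomial (γ + Finsupp.single i₀ 1) (1:ℂ)) else 0)
      - (if i = b0 then ((γ b0 : ℂ)+1)⁻¹ * eval z (monomial (γ + Finsupp.single b0 1) (1:ℂ)) else 0)))
    (fun i₀ _ => IsSS_smul _ (hpair i₀))
  refine IsSS_congr (fun z i => ?_) hsum
  simp only [mul_sub]
  rw [Finset.sum_sub_distrib]
  have e2 : ∑ i₀ : Fin n, (((γ i₀ : ℂ)+1) * c i₀) *
      (if i = b0 then ((γ b0 : ℂ)+1)⁻¹ * eval z (monomial (γ + Finsupp.single b0 1) (1:ℂ)) else 0)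
      = 0 := by
    rw [← Finset.sum_mul, hC, zero_mul]
  rw [e2, sub_zero]
  have e1 : ∑ i₀ : Fin n, (((γ i₀ : ℂ)+1) * c i₀) *
      (if i = i₀ then ((γ i₀ : ℂ)+1)⁻¹ * eval z (monomial (γ + Finsupp.single i₀ 1) (1:ℂ)) else 0)
      = (((γ i : ℂ)+1) * c i) * (((γ i : ℂ)+1)⁻¹ * eval z (monomial (γ + Finsupp.single i 1) (1:ℂ))) := by
    rw [Fintype.sum_eq_single i (fun i₀ hne => by rw [if_neg (Ne.symm hne), mul_zero]),
      if_pos rfl]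
  rw [e1]
  have hmon : monomial (γ + Finsupp.single i 1) (c i)
      = C (c i) * monomial (γ + Finsupp.single i 1) (1:ℂ) := by
    rw [C_mul_monomial, mul_one]
  rw [hmon, eval_mul, eval_C]
  have hne : ((γ i : ℂ)+1) ≠ 0 := Nat.cast_add_one_ne_zero _
  field_simp

/-- Andersén's lemma: every divergence-free polynomial vector field on ℂⁿ (n ≥ 2) is a finite
sum of complete divergence-free polynomial shear fields `z ↦ f_j(z)·v_j`, where `f_j` is a
polynomial that is constant in the direction `v_j`. -/
theorem divergence_free_polynomial_field_is_sum_of_shear_fields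
    (n : ℕ) (hn : 2 ≤ n)
    (V : (Fin n → ℂ) → (Fin n → ℂ))
    (P : Fin n → MvPolynomial (Fin n) ℂ)
    (hVpoly : ∀ (z : Fin n → ℂ) (i : Fin n), V z i = MvPolynomial.eval z (P i))
    (hdiv : ∀ z : Fin n → ℂ,
      ∑ i : Fin n, MvPolynomial.eval z (MvPolynomial.pderiv i (P i)) = 0) :
    ∃ (N : ℕ) (v : Fin N → (Fin n → ℂ)) (f : Fin N → MvPolynomial (Fin n) ℂ),
      (∀ (j : Fin N) (z : Fin n → ℂ),
        ∑ i : Fin n, MvPolynomial.eval z (MvPolynomial.pderiv i (f j)) * v j i = 0) ∧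
      (∀ (z : Fin n → ℂ) (i : Fin n),
        V z i = ∑ j : Fin N, MvPolynomial.eval z (f j) * v j i) := by
  classical
  suffices h : IsSS n V by
    obtain ⟨N, v, f, h1, h2⟩ := h
    exact ⟨N, v, f, h1, h2⟩
  -- the shear ("A") part and the grouped ("G") parts
  set Apart : Fin n → MvPolynomial (Fin n) ℂ := fun i =>
    ∑ α ∈ (P i).support.filter (fun α => α i = 0), monomial α (coeff α (P i)) with hApartDef
  set Γ : Finset (Fin n →₀ ℕ) := Finset.univ.biUnion (fun i =>
    ((P i).support.filter (fun α => α i ≠ 0)).image (fun α => α - Finsupp.single i 1)) with hΓdef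
  have hsplitP : ∀ i, P i = Apart i +
      ∑ γ ∈ Γ, monomial (γ + Finsupp.single i 1) (coeff (γ + Finsupp.single i 1) (P i)) := by
    intro i
    conv_lhs => rw [(P i).as_sum]
    rw [← Finset.sum_filter_add_sum_filter_not (P i).support (fun α => α i = 0)]
    congr 1
    have hinj : ∀ α ∈ (P i).support.filter (fun α => ¬ α i = 0),
        ∀ β ∈ (P i).support.filter (fun α => ¬ α i = 0),
        α - Finsupp.single i 1 = β - Finsupp.single i 1 → α = β := by
      intro α hα β hβ hmap
      have h1 : Finsupp.single i 1 ≤ α := Finsupp.single_le_iff.mpr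
        (by have := (Finset.mem_filter.mp hα).2; omega)
      have h2 : Finsupp.single i 1 ≤ β := Finsupp.single_le_iff.mpr
        (by have := (Finset.mem_filter.mp hβ).2; omega)
      rw [← tsub_add_cancel_of_le h1, ← tsub_add_cancel_of_le h2, hmap]
    have himg : ∑ γ ∈ ((P i).support.filter (fun α => ¬ α i = 0)).image
          (fun α => α - Finsupp.single i 1),
          monomial (γ + Finsupp.single i 1) (coeff (γ + Finsupp.single i 1) (P i))
        = ∑ α ∈ (P i).support.filter (fun α => ¬ α i = 0), monomial α (coeff α (P i)) := by
      rw [Finset.sum_image hinj]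
      refine Finset.sum_congr rfl fun α hα => ?_
      have h1 : Finsupp.single i 1 ≤ α := Finsupp.single_le_iff.mpr
        (by have := (Finset.mem_filter.mp hα).2; omega)
      rw [tsub_add_cancel_of_le h1]
    rw [← himg]
    refine Finset.sum_subset ?_ ?_
    · intro γ hγ
      refine Finset.mem_biUnion.mpr ⟨i, Finset.mem_univ i, hγ⟩
    · intro γ _ hγ
      have hc : coeff (γ + Finsupp.single i 1) (P i) = 0 := by
        by_contra hc
        apply hγ
        have hmem : γ + Finsupp.single i 1 ∈ (P i).support.filter (fun α => ¬ α i = 0) := by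
          rw [Finset.mem_filter]
          refine ⟨mem_support_iff.mpr hc, ?_⟩
          have e1 : (γ + Finsupp.single i 1 : Fin n →₀ ℕ) i = γ i + 1 := by
            rw [Finsupp.add_apply, Finsupp.single_eq_same]
          rw [e1]
          omega
        have h3 := Finset.mem_image_of_mem (fun α => α - Finsupp.single i 1) hmem
        rwa [add_tsub_cancel_right (α := Fin n →₀ ℕ)] at h3
      rw [hc, monomial_zero]
  have hApart : IsSS n (fun z i => eval z (Apart i)) := by
    have hshear : ∀ i₀ : Fin n,
        IsSS n (fun z i => eval z (Apart i₀) * (if i = i₀ then (1:ℂ) else 0)) := by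
      intro i₀
      refine IsSS_shear (Apart i₀) (fun i => if i = i₀ then 1 else 0) (fun z => ?_)
      have hp : pderiv i₀ (Apart i₀) = 0 := by
        rw [hApartDef]
        dsimp only
        rw [map_sum]
        refine Finset.sum_eq_zero fun α hα => ?_
        rw [pderiv_monomial, (Finset.mem_filter.mp hα).2]
        simp
      rw [Fintype.sum_eq_single i₀ (fun i hne => by rw [if_neg hne, mul_zero]), hp]
      simp
    have hs := IsSS_sum (n := n) Finset.univ
      (fun i₀ z i => eval z (Apart i₀) * (if i = i₀ then (1:ℂ) else 0))
      (fun i₀ _ => hshear i₀)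
    refine IsSS_congr (fun z i => ?_) hs
    rw [Fintype.sum_eq_single i (fun i₀ hne => by rw [if_neg (Ne.symm hne), mul_zero]),
      if_pos rfl, mul_one]
  have hG : IsSS n (fun z i => ∑ γ ∈ Γ,
      eval z (monomial (γ + Finsupp.single i 1) (coeff (γ + Finsupp.single i 1) (P i)))) := by
    refine IsSS_sum Γ _ (fun γ _ => ?_)
    exact IsSS_G hn γ (fun i => coeff (γ + Finsupp.single i 1) (P i)) (div_coeff P hdiv γ)
  refine IsSS_congr (fun z i => ?_) (IsSS_add hApart hG)
  rw [hVpoly z i]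
  conv_rhs => rw [hsplitP i]
  rw [map_add, map_sum, map_sum (eval z)
    (fun γ => monomial (γ + Finsupp.single i 1) (coeff (γ + Finsupp.single i 1) (P i))) Γ]
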